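/- arXiv:2502.18167 — 4 statements merged into one kernel-verified Lean document; each statement's English description precedes it below -/
import Mathlib

section
/- For all real x ≥ 0, (1 + x) * log(1 + x) - x ≥ x^2 / (2 + (2/3) * x). -/
/-!
Write `B x = x ^ 2 / (2 + (2 / 3) * x)`. Both `φ` and `B` vanish at `0` together with their first
derivatives `log (1 + x)` and `3 x (x + 6) / (2 (x + 3) ^ 2)`, and their second derivatives are
`1 / (1 + x)` and `27 / (x + 3) ^ 3`. Since `(x + 3) ^ 3 - 27 (1 + x) = x ^ 2 (x + 9) ≥ 0`, comparing
derivatives twice on `[0, x]` gives `B ≤ φ`.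
-/

open Real Set

lemma le_of_hasDerivAt_le {f g f' g' : ℝ → ℝ} {a b : ℝ} (hab : a ≤ b)
    (hf : ∀ x ∈ Icc a b, HasDerivAt f (f' x) x) (hg : ∀ x ∈ Icc a b, HasDerivAt g (g' x) x)
    (ha : f a ≤ g a) (hderiv : ∀ x ∈ Ico a b, f' x ≤ g' x) : f b ≤ g b :=
  image_le_of_deriv_right_le_deriv_boundary
    (fun x hx ↦ (hf x hx).continuousAt.continuousWithinAt)
    (fun x hx ↦ (hf x (Ico_subset_Icc_self hx)).hasDerivWithinAt) ha
    (fun x hx ↦ (hg x hx).continuousAt.continuousWithinAt)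
    (fun x hx ↦ (hg x (Ico_subset_Icc_self hx)).hasDerivWithinAt) hderiv ⟨hab, le_rfl⟩

lemma hasDerivAt_log_one_add {y : ℝ} (hy : 1 + y ≠ 0) :
    HasDerivAt (fun x ↦ log (1 + x)) (1 / (1 + y)) y := by
  simpa using ((hasDerivAt_id' y).const_add 1).log hy

lemma hasDerivAt_one_add_mul_log_one_add_sub {y : ℝ} (hy : 1 + y ≠ 0) :
    HasDerivAt (fun x ↦ (1 + x) * log (1 + x) - x) (log (1 + y)) y := by
  simpa using ((hasDerivAt_mul_log hy).comp y ((hasDerivAt_id' y).const_add 1)).fun_sub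
    (hasDerivAt_id' y)

lemma hasDerivAt_sq_div_two_add {y : ℝ} (hy : y + 3 ≠ 0) :
    HasDerivAt (fun x ↦ x ^ 2 / (2 + (2 / 3) * x)) (3 * y * (y + 6) / (2 * (y + 3) ^ 2)) y := by
  have hden : 2 + (2 / 3) * y ≠ 0 := fun h ↦ hy (by linarith)
  refine ((hasDerivAt_pow 2 y).fun_div
    (((hasDerivAt_id' y).const_mul (2 / 3)).const_add 2) hden).congr_deriv ?_
  rw [div_eq_div_iff (pow_ne_zero 2 hden) (by positivity)]
  ring

lemma hasDerivAt_mul_div_sq {y : ℝ} (hy : y + 3 ≠ 0) :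
    HasDerivAt (fun x ↦ 3 * x * (x + 6) / (2 * (x + 3) ^ 2)) (27 / (y + 3) ^ 3) y := by
  have hnum := ((hasDerivAt_id' y).const_mul 3).fun_mul ((hasDerivAt_id' y).add_const 6)
  have hden := (((hasDerivAt_id' y).add_const 3).fun_pow 2).const_mul 2
  refine (hnum.fun_div hden (by positivity)).congr_deriv ?_
  field_simp
  ring

lemma div_cube_le_one_div_one_add {y : ℝ} (hy : -1 < y) : 27 / (y + 3) ^ 3 ≤ 1 / (1 + y) := by
  have h1 : 0 < 1 + y := by linarith
  have h3 : 0 < y + 3 := by linarith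
  rw [div_le_div_iff₀ (by positivity) h1]
  nlinarith [mul_nonneg (sq_nonneg y) (show 0 ≤ y + 9 by linarith)]

lemma mul_div_sq_le_log_one_add {x : ℝ} (hx : 0 ≤ x) :
    3 * x * (x + 6) / (2 * (x + 3) ^ 2) ≤ log (1 + x) :=
  le_of_hasDerivAt_le hx
    (fun y hy ↦ hasDerivAt_mul_div_sq (by linarith [hy.1]))
    (fun y hy ↦ hasDerivAt_log_one_add (by linarith [hy.1]))
    (by simp) (fun y hy ↦ div_cube_le_one_div_one_add (by linarith [hy.1]))

theorem phi_ge_bernstein (x : ℝ) (hx : 0 ≤ x) :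
    (1 + x) * Real.log (1 + x) - x ≥ x ^ 2 / (2 + (2 / 3) * x) :=
  le_of_hasDerivAt_le (f := fun x ↦ x ^ 2 / (2 + (2 / 3) * x))
    (g := fun x ↦ (1 + x) * log (1 + x) - x) hx
    (fun y hy ↦ hasDerivAt_sq_div_two_add (by linarith [hy.1]))
    (fun y hy ↦ hasDerivAt_one_add_mul_log_one_add_sub (by linarith [hy.1]))
    (by simp) (fun y hy ↦ mul_div_sq_le_log_one_add hy.1)
end

section
/- Let Z be a real random variable with log E[exp(λ(Z - E[Z]))] ≤ v ψ(-λ c) for all λ > 0, with v, c > 0 and ψ(x) = e^{-x}+x-1. Then for every t > 0, P(Z ≥ E[Z] + √(2 c² v t) + (2 c t)/3) ≤ e^{-t}. -/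
/-!
By Chernoff, `P(Z - E Z ≥ a) ≤ exp (-l * a + v * ψ(-l * c))` for every `l > 0`. For `u < 3` one has
`ψ(-u) = exp u - u - 1 ≤ u ^ 2 / (2 * (1 - u / 3))`. With `r = √(2 t / v)`, `u = 3 r / (3 + r)` and
`l = u / c`, the deviation `a = √(2 c² v t) + 2 c t / 3` satisfies `l * a = v r²`, while
`v * ψ(-u) ≤ v u r / 2 ≤ v r² / 2 = t`; so the exponent is at most `-t`.
-/

open MeasureTheory Real Set ProbabilityTheory

lemma one_sub_mul_exp_le_one (x : ℝ) : (1 - x) * exp x ≤ 1 := by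
  have h := mul_le_mul_of_nonneg_right (add_one_le_exp (-x)) (exp_pos x).le
  rwa [← exp_add, neg_add_cancel, exp_zero, neg_add_eq_sub] at h

lemma monotone_sub_two_mul_exp_add_add_two : Monotone fun x : ℝ => (x - 2) * exp x + x + 2 := by
  refine monotone_of_hasDerivAt_nonneg (f' := fun x => 1 - (1 - x) * exp x) (fun x => ?_)
    (fun x => sub_nonneg.2 (one_sub_mul_exp_le_one x))
  exact ((((hasDerivAt_id x).sub_const 2).mul (hasDerivAt_exp x)).add
    (hasDerivAt_id x)).add_const 2 |>.congr_deriv (by simp only [id]; ring)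

/-- `exp u - u - 1 ≤ u ^ 2 / (2 * (1 - u / 3))` for `u < 3` with the denominator cleared: the dual
form of `φ x ≥ x ^ 2 / (2 + 2 * x / 3)`. -/
lemma three_sub_mul_exp_sub_sub_one_le (u : ℝ) : (3 - u) * (exp u - u - 1) ≤ 3 * u ^ 2 / 2 := by
  let F : ℝ → ℝ := fun x => 3 * x ^ 2 / 2 - (3 - x) * (exp x - x - 1)
  have hF : ∀ x, HasDerivAt F ((x - 2) * exp x + x + 2) x := fun x =>
    (((hasDerivAt_pow 2 x).const_mul 3).div_const 2).sub
      (((hasDerivAt_id x).const_sub 3).mul (((hasDerivAt_exp x).sub (hasDerivAt_id x)).sub_const 1))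
      |>.congr_deriv (by simp only [id, Pi.sub_apply]; norm_num; ring)
  have hmin : IsMinOn F univ 0 := by
    refine isMinOn_univ_of_deriv (hF 0).continuousAt
      (fun x _ => (hF x).differentiableAt.differentiableWithinAt)
      (fun x _ => (hF x).differentiableAt.differentiableWithinAt) (fun x hx => ?_) (fun x hx => ?_)
    · simpa [(hF x).deriv] using monotone_sub_two_mul_exp_add_add_two hx.le
    · simpa [(hF x).deriv] using monotone_sub_two_mul_exp_add_add_two hx.le
  have h0u : F 0 ≤ F u := hmin (mem_univ u)
  norm_num [F] at h0u
  linarith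

lemma measure_ge_le_ofReal_exp_of_log_mgf_le {Ω : Type*} [MeasurableSpace Ω] {μ : Measure Ω}
    [IsFiniteMeasure μ] [NeZero μ] {X : Ω → ℝ} {l B : ℝ} (a : ℝ) (hl : 0 ≤ l)
    (hint : Integrable (fun ω => exp (l * X ω)) μ) (hB : log (mgf X μ l) ≤ B) :
    μ {ω | a ≤ X ω} ≤ ENNReal.ofReal (exp (-l * a + B)) := by
  rw [← ofReal_measureReal]
  gcongr
  calc μ.real {ω | a ≤ X ω} ≤ exp (-l * a) * mgf X μ l := measure_ge_le_exp_mul_mgf a hl hint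
    _ = exp (-l * a + log (mgf X μ l)) := by rw [exp_add, exp_log (mgf_pos' (NeZero.ne μ) hint)]
    _ ≤ exp (-l * a + B) := by gcongr

lemma exists_pos_bernstein_exponent {v c t : ℝ} (hv : 0 < v) (hc : 0 < c) (ht : 0 < t) :
    ∃ l > 0, -l * (√(2 * c ^ 2 * v * t) + 2 * c * t / 3) + v * (exp (l * c) - l * c - 1) ≤ -t := by
  set r := √(2 * t / v)
  have hr : 0 < r := sqrt_pos.2 (by positivity)
  have hvr : v * r ^ 2 = 2 * t := by
    rw [sq_sqrt (by positivity)]; field_simp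
  have hsqrt : √(2 * c ^ 2 * v * t) = c * v * r := by
    rw [← sqrt_sq (by positivity : 0 ≤ c * v * r)]
    congr 1
    linear_combination (c ^ 2 * v) * hvr.symm
  -- `u` makes the bound `u ^ 2 / (2 * (1 - u / 3))` on `exp u - u - 1` equal to `u * r / 2`
  obtain ⟨u, hu_def⟩ : ∃ u, u * (3 + r) = 3 * r := ⟨3 * r / (3 + r), by field_simp⟩
  have hu : 0 < u := by nlinarith
  have hur : u ≤ r := by nlinarith
  have hu3 : u < 3 := by nlinarith
  have hψ : exp u - u - 1 ≤ u * r / 2 := by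
    have key := three_sub_mul_exp_sub_sub_one_le u
    rw [show 3 * u ^ 2 / 2 = (3 - u) * (u * r / 2) by linear_combination (u / 2) * hu_def] at key
    exact le_of_mul_le_mul_left key (by linarith)
  refine ⟨u / c, by positivity, ?_⟩
  have hla : u / c * (c * v * r + 2 * c * t / 3) = v * r ^ 2 := by
    rw [show u / c * (c * v * r + 2 * c * t / 3) = u * (v * r + 2 * t / 3) by field_simp]
    linear_combination (v * r / 3) * hu_def - (u / 3) * hvr
  rw [hsqrt, div_mul_cancel₀ u hc.ne', neg_mul, hla]
  nlinarith [mul_le_mul_of_nonneg_left hψ hv.le,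
    mul_le_mul_of_nonneg_left hur (by positivity : 0 ≤ v * r)]

theorem bernstein_deviation_general {Ω : Type*} [MeasurableSpace Ω] (μ : Measure Ω)
    [IsProbabilityMeasure μ] (Z : Ω → ℝ)
    (v c : ℝ) (hv : 0 < v) (hc : 0 < c)
    (hmgf : ∀ l : ℝ, 0 < l →
      Integrable (fun ω => Real.exp (l * (Z ω - ∫ ω', Z ω' ∂μ))) μ ∧
      Real.log (∫ ω, Real.exp (l * (Z ω - ∫ ω', Z ω' ∂μ)) ∂μ) ≤
        v * (Real.exp (l * c) - l * c - 1)) :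
    ∀ t : ℝ, 0 < t →
      μ {ω | (∫ ω', Z ω' ∂μ) + Real.sqrt (2 * c ^ 2 * v * t) + 2 * c * t / 3 ≤ Z ω} ≤
        ENNReal.ofReal (Real.exp (-t)) := by
  intro t ht
  obtain ⟨l, hl, hexponent⟩ := exists_pos_bernstein_exponent hv hc ht
  obtain ⟨hint, hlog⟩ := hmgf l hl
  calc μ {ω | (∫ ω', Z ω' ∂μ) + √(2 * c ^ 2 * v * t) + 2 * c * t / 3 ≤ Z ω}
      = μ {ω | √(2 * c ^ 2 * v * t) + 2 * c * t / 3 ≤ Z ω - ∫ ω', Z ω' ∂μ} := by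
        simp only [le_sub_iff_add_le', add_assoc]
    _ ≤ _ := measure_ge_le_ofReal_exp_of_log_mgf_le _ hl.le hint hlog
    _ ≤ ENNReal.ofReal (exp (-t)) := by gcongr

theorem bernstein_deviation {Ω : Type*} [MeasurableSpace Ω] (μ : Measure Ω)
    [IsProbabilityMeasure μ] (Z : Ω → ℝ) (hZ : Integrable Z μ)
    (v c : ℝ) (hv : 0 < v) (hc : 0 < c)
    (hmgf : ∀ l : ℝ, 0 < l →
      Integrable (fun ω => Real.exp (l * (Z ω - ∫ ω', Z ω' ∂μ))) μ ∧
      Real.log (∫ ω, Real.exp (l * (Z ω - ∫ ω', Z ω' ∂μ)) ∂μ) ≤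
        v * (Real.exp (l * c) - l * c - 1)) :
    ∀ t : ℝ, 0 < t →
      μ {ω | (∫ ω', Z ω' ∂μ) + Real.sqrt (2 * c ^ 2 * v * t) + 2 * c * t / 3 ≤ Z ω} ≤
        ENNReal.ofReal (Real.exp (-t)) :=
  bernstein_deviation_general μ Z v c hv hc hmgf
end

section
/- A nontrivial sub-root function Φ : [0,∞) → [0,∞) (nonnegative, nondecreasing, with r ↦ Φ(r)/√r nonincreasing on (0,∞), and not identically zero) is continuous on (0,∞) and the equation Φ(r) = r has a unique positive solution r*; moreover for every r > 0, r ≥ Φ(r) if and only if r ≥ r*. -/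
/-!
Write `ψ r = Φ r / √r`, so that `Φ r ≤ r ↔ ψ r ≤ √r` for `r > 0`. Since `ψ` is antitone and `√`
is strictly increasing, `Φ r ≤ r` at some `r > 0` forces `Φ s < s` for every `s > r`; this gives
the uniqueness of the fixed point and the comparison with it.
Existence is the intermediate value theorem: with `c = ψ a > 0` one has `ψ ≥ c > √r` for small
`r` and `ψ ≤ c < √r` for large `r`. Continuity comes from sandwiching `Φ` between `Φ x` and
`ψ x * √r`, which gives `|Φ r - Φ x| ≤ ψ x * |√r - √x|`.
-/

open Real Set Filter Topology

lemma div_sqrt_le_sqrt_iff {y r : ℝ} (hr : 0 < r) : y / √r ≤ √r ↔ y ≤ r := by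
  rw [div_le_iff₀ (sqrt_pos.2 hr), mul_self_sqrt hr.le]

lemma div_sqrt_lt_sqrt_iff {y r : ℝ} (hr : 0 < r) : y / √r < √r ↔ y < r := by
  rw [div_lt_iff₀ (sqrt_pos.2 hr), mul_self_sqrt hr.le]

namespace SubRoot

variable {Φ : ℝ → ℝ}

lemma abs_sub_le (hmono : MonotoneOn Φ (Ioi 0))
    (hsub : AntitoneOn (fun r => Φ r / √r) (Ioi 0)) {x r : ℝ} (hx : 0 < x) (hr : 0 < r) :
    |Φ r - Φ x| ≤ Φ x / √x * |√r - √x| := by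
  have hΦx : Φ x / √x * √x = Φ x := div_mul_cancel₀ _ (sqrt_pos.2 hx).ne'
  rcases le_total r x with hrx | hxr
  · have hlow : Φ x / √x * √r ≤ Φ r := (le_div_iff₀ (sqrt_pos.2 hr)).1 (hsub hr hx hrx)
    rw [abs_of_nonpos (sub_nonpos.2 (hmono hr hx hrx)),
      abs_of_nonpos (sub_nonpos.2 (sqrt_le_sqrt hrx))]
    linarith
  · have hup : Φ r ≤ Φ x / √x * √r := (div_le_iff₀ (sqrt_pos.2 hr)).1 (hsub hx hr hxr)
    rw [abs_of_nonneg (sub_nonneg.2 (hmono hx hr hxr)),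
      abs_of_nonneg (sub_nonneg.2 (sqrt_le_sqrt hxr))]
    linarith

lemma continuousOn (hmono : MonotoneOn Φ (Ioi 0))
    (hsub : AntitoneOn (fun r => Φ r / √r) (Ioi 0)) : ContinuousOn Φ (Ioi 0) := by
  intro x hx
  have hbound : Tendsto (fun r => Φ x / √x * |√r - √x|) (𝓝[Ioi 0] x) (𝓝 0) := by
    have hcont : Continuous fun r => Φ x / √x * |√r - √x| := by fun_prop
    simpa using (hcont.tendsto x).mono_left nhdsWithin_le_nhds
  refine tendsto_iff_norm_sub_tendsto_zero.2 <| squeeze_zero' (.of_forall fun _ => norm_nonneg _)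
    ?_ hbound
  filter_upwards [self_mem_nhdsWithin] with r hr
  exact abs_sub_le hmono hsub hx hr

lemma apply_lt_of_apply_le (hsub : AntitoneOn (fun r => Φ r / √r) (Ioi 0)) {r s : ℝ}
    (hr : 0 < r) (hrs : r < s) (h : Φ r ≤ r) : Φ s < s := by
  have hs : 0 < s := hr.trans hrs
  rw [← div_sqrt_lt_sqrt_iff hs]
  calc Φ s / √s ≤ Φ r / √r := hsub hr hs hrs.le
    _ ≤ √r := (div_sqrt_le_sqrt_iff hr).2 h
    _ < √s := sqrt_lt_sqrt hr.le hrs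

lemma apply_le_iff (hsub : AntitoneOn (fun r => Φ r / √r) (Ioi 0)) {r₀ r : ℝ}
    (hr₀ : 0 < r₀) (hfix : Φ r₀ = r₀) (hr : 0 < r) : Φ r ≤ r ↔ r₀ ≤ r := by
  constructor
  · intro h
    by_contra! hlt
    exact (apply_lt_of_apply_le hsub hr hlt h).ne hfix
  · intro h
    rcases h.eq_or_lt with rfl | hlt
    · exact hfix.le
    · exact (apply_lt_of_apply_le hsub hr₀ hlt hfix.le).le

lemma exists_lt_apply (hsub : AntitoneOn (fun r => Φ r / √r) (Ioi 0)) {a : ℝ} (ha : 0 < a)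
    (hΦa : 0 < Φ a) : ∃ r, 0 < r ∧ r < Φ r := by
  have hsqrt : Tendsto (√·) (𝓝[>] 0) (𝓝 0) := by
    simpa using continuous_sqrt.continuousWithinAt.tendsto (s := Ioi 0) (x := 0)
  obtain ⟨r, ⟨hr, hra⟩, hsr⟩ := Eventually.exists <| Eventually.and (Ioc_mem_nhdsGT ha)
    (hsqrt.eventually (eventually_lt_nhds (div_pos hΦa (sqrt_pos.2 ha))))
  exact ⟨r, hr, lt_of_not_ge fun h =>
    hsr.not_ge ((hsub hr ha hra).trans ((div_sqrt_le_sqrt_iff hr).2 h))⟩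

lemma exists_apply_lt (hsub : AntitoneOn (fun r => Φ r / √r) (Ioi 0)) {a : ℝ} (ha : 0 < a) :
    ∃ r, 0 < r ∧ Φ r < r := by
  obtain ⟨r, har, hsr⟩ := ((eventually_ge_atTop a).and
    (tendsto_sqrt_atTop.eventually_gt_atTop (Φ a / √a))).exists
  have hr : 0 < r := ha.trans_le har
  exact ⟨r, hr, (div_sqrt_lt_sqrt_iff hr).1 ((hsub ha hr har).trans_lt hsr)⟩

end SubRoot

theorem subroot_fixed_point (Φ : ℝ → ℝ)
    (hnonneg : ∀ r : ℝ, 0 ≤ r → 0 ≤ Φ r)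
    (hmono : MonotoneOn Φ (Set.Ici 0))
    (hsub : AntitoneOn (fun r => Φ r / Real.sqrt r) (Set.Ioi 0))
    (hnontriv : ∃ r : ℝ, 0 ≤ r ∧ Φ r ≠ 0) :
    ContinuousOn Φ (Set.Ioi 0) ∧
    ∃ rstar : ℝ, 0 < rstar ∧ Φ rstar = rstar ∧
      (∀ r : ℝ, 0 < r → Φ r = r → r = rstar) ∧
      (∀ r : ℝ, 0 < r → (Φ r ≤ r ↔ rstar ≤ r)) := by
  obtain ⟨r₀, hr₀, hΦr₀⟩ := hnontriv
  have ha : 0 < r₀ + 1 := by linarith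
  have hΦa : 0 < Φ (r₀ + 1) :=
    ((hnonneg r₀ hr₀).lt_of_ne' hΦr₀).trans_le (hmono hr₀ ha.le (by linarith))
  have hcont := SubRoot.continuousOn (hmono.mono Ioi_subset_Ici_self) hsub
  obtain ⟨r₁, hr₁, hlt₁⟩ := SubRoot.exists_lt_apply hsub ha hΦa
  obtain ⟨r₂, hr₂, hlt₂⟩ := SubRoot.exists_apply_lt hsub ha
  obtain ⟨rstar, hrstar, hfix⟩ := isPreconnected_Ioi.intermediate_value₂ hr₁ hr₂
    continuousOn_id hcont hlt₁.le hlt₂.le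
  replace hfix : Φ rstar = rstar := hfix.symm
  refine ⟨hcont, rstar, hrstar, hfix, fun r hr hrfix => ?_,
    fun r hr => SubRoot.apply_le_iff hsub hrstar hfix hr⟩
  exact le_antisymm ((SubRoot.apply_le_iff hsub hr hrfix hrstar).1 hfix.le)
    ((SubRoot.apply_le_iff hsub hrstar hfix hr).1 hrfix.le)
end

section
/- Let v, v_kj, W > 0 with the following setup: if v_kj^{1/2} W^{1/2} v^{-1/2} ≤ 1 then v ≥ v_kj W and for any λ, U > 0, v_kj ψ(-λU) ≤ (v/W) ψ(-λU); if v_kj^{1/2} W^{1/2} v^{-1/2} > 1 then v < v_kj W and v_kj ψ(-λ U √v / (√v_kj √W)) ≤ (v/W) ψ(-λU), where ψ(x) = e^{-x} + x - 1. Concretely: for positive reals a, c, λ, U with a ≤ c, a · ψ(-λU) ≤ c · ψ(-λU); and for positive reals a, c, λ, U with a > c, a · ψ(-λU √(c/a)) ≤ c · ψ(-λU). -/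
/-! With `φ s = exp s - s - 1 = ∑_{n ≥ 2} sⁿ / n!`, every term of `φ (t * s)` is the matching term
of `φ s` multiplied by `tⁿ ≤ t²` when `0 ≤ t ≤ 1` and `s ≥ 0`, so `φ (t * s) ≤ t² φ s`.
Taking `t = √(c / a)` and multiplying by `a` gives the second claim; the first one only needs
`φ ≥ 0`. -/

open Real Finset Nat

lemma Real.hasSum_pow_div_factorial_add_two (x : ℝ) :
    HasSum (fun n => x ^ (n + 2) / (n + 2)!) (exp x - x - 1) := by
  have h := (hasSum_nat_add_iff' 2).mpr (exp_eq_exp_ℝ ▸ NormedSpace.expSeries_div_hasSum_exp x)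
  simpa [sum_range_succ, sub_sub, add_comm] using h

lemma Real.exp_mul_sub_mul_sub_one_le {t s : ℝ} (ht₀ : 0 ≤ t) (ht₁ : t ≤ 1) (hs : 0 ≤ s) :
    exp (t * s) - t * s - 1 ≤ t ^ 2 * (exp s - s - 1) := by
  refine hasSum_le (fun n => ?_) (hasSum_pow_div_factorial_add_two (t * s))
    ((hasSum_pow_div_factorial_add_two s).mul_left (t ^ 2))
  have htn : t ^ n ≤ 1 := pow_le_one₀ ht₀ ht₁
  have hterm : 0 ≤ s ^ (n + 2) / (n + 2)! := by positivity
  calc (t * s) ^ (n + 2) / (n + 2)! = t ^ 2 * (t ^ n * (s ^ (n + 2) / (n + 2)!)) := by ring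
    _ ≤ t ^ 2 * (s ^ (n + 2) / (n + 2)!) := by gcongr; exact mul_le_of_le_one_left hterm htn

theorem psi_monotone_and_homogeneity (a c l U : ℝ)
    (ha : 0 < a) (hc : 0 < c) (hl : 0 < l) (hU : 0 < U) :
    (a ≤ c → a * (Real.exp (-(-(l * U))) + (-(l * U)) - 1) ≤
      c * (Real.exp (-(-(l * U))) + (-(l * U)) - 1)) ∧
    (c < a → a * (Real.exp (-(-(l * U * Real.sqrt (c / a)))) +
        (-(l * U * Real.sqrt (c / a))) - 1) ≤
      c * (Real.exp (-(-(l * U))) + (-(l * U)) - 1)) := by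
  simp only [neg_neg, ← sub_eq_add_neg]
  have hs : 0 ≤ l * U := (mul_pos hl hU).le
  refine ⟨fun hac => mul_le_mul_of_nonneg_right hac ?_, fun hca => ?_⟩
  · linarith [add_one_le_exp (l * U)]
  · set t := √(c / a)
    have ht₁ : t ≤ 1 := sqrt_le_one.mpr ((div_le_one ha).mpr hca.le)
    have hat : a * t ^ 2 = c := by
      rw [sq_sqrt (div_pos hc ha).le]
      field_simp
    calc a * (exp (l * U * t) - l * U * t - 1)
        = a * (exp (t * (l * U)) - t * (l * U) - 1) := by ring_nf
      _ ≤ a * (t ^ 2 * (exp (l * U) - l * U - 1)) :=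
        mul_le_mul_of_nonneg_left (exp_mul_sub_mul_sub_one_le (sqrt_nonneg _) ht₁ hs) ha.le
      _ = c * (exp (l * U) - l * U - 1) := by rw [← hat]; ring
end
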